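/- arXiv:2503.01615 — 5 statements merged into one kernel-verified Lean document; each statement's English description precedes it below -/
import Mathlib

section
/- For every integer n ≥ 1, the map Ψ sending A ∈ GL(n+1, ℝ) to the matrix A e₊ + Q (A⁻¹)ᵗ Q e₋ over ℝ × ℝ — i.e. to the pair of real matrices (A, Q(A⁻¹)ᵗQ) — is an injective group homomorphism from GL(n+1, ℝ) into the group of invertible (n+1)×(n+1) matrices over the ring ℝ × ℝ, and its image is exactly the unitary group U(n+1, ℝ_τ, Q) of matrices preserving the para-Hermitian form q; in particular, Ψ is a group isomorphism from GL(n+1, ℝ) onto U(n+1, ℝ_τ, Q). -/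
open Matrix

/-- The `n × n` real antidiagonal matrix with all antidiagonal entries equal to `1`. -/
noncomputable def Qmat (n : ℕ) : Matrix (Fin n) (Fin n) ℝ :=
  Matrix.of fun i j => if (i : ℕ) + (j : ℕ) + 1 = n then (1 : ℝ) else 0

/-- The para-Hermitian form `q(z, z') = (vᵗQw') e₊ + (wᵗQv') e₋` on `ℝ_τⁿ`, where the
para-complex numbers are modeled by `ℝ × ℝ` (so `z i = (v i, w i)`). -/
noncomputable def paraq (n : ℕ) (z z' : Fin n → ℝ × ℝ) : ℝ × ℝ :=
  ((fun i => (z i).1) ⬝ᵥ (Qmat n).mulVec (fun i => (z' i).2),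
   (fun i => (z i).2) ⬝ᵥ (Qmat n).mulVec (fun i => (z' i).1))

/-- The map `Ψ(A) = A e₊ + Q (A⁻¹)ᵗ Q e₋`, sending a real invertible matrix to a matrix
over the para-complex numbers `ℝ_τ ≅ ℝ × ℝ`. -/
noncomputable def Psi (n : ℕ) (A : Matrix.GeneralLinearGroup (Fin n) ℝ) :
    Matrix (Fin n) (Fin n) (ℝ × ℝ) :=
  Matrix.of fun i j =>
    ((A : Matrix (Fin n) (Fin n) ℝ) i j,
     (Qmat n * ((A⁻¹ : Matrix.GeneralLinearGroup (Fin n) ℝ) : Matrix (Fin n) (Fin n) ℝ)ᵀ *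
        Qmat n) i j)

lemma Qmat_apply (n : ℕ) (i j : Fin n) :
    Qmat n i j = if j = i.rev then 1 else 0 := by
  unfold Qmat
  simp only [Matrix.of_apply]
  congr 1
  rw [eq_iff_iff, Fin.ext_iff, Fin.val_rev]
  omega

lemma Qmat_mul_Qmat (n : ℕ) : Qmat n * Qmat n = 1 := by
  ext i j
  rw [Matrix.mul_apply]
  simp only [Qmat_apply, ite_mul, one_mul, zero_mul, Finset.sum_ite_eq',
    Finset.mem_univ, if_true, Fin.rev_rev, Matrix.one_apply, eq_comm]

lemma Qmat_transpose (n : ℕ) : (Qmat n)ᵀ = Qmat n := by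
  ext i j
  simp only [Matrix.transpose_apply, Qmat]
  simp only [Matrix.of_apply]
  have : ((j : ℕ) + (i : ℕ) + 1 = n) ↔ ((i : ℕ) + (j : ℕ) + 1 = n) := by omega
  simp [this]

lemma bilin_eq {m : ℕ} (A B : Matrix (Fin m) (Fin m) ℝ)
    (h : ∀ v w, v ⬝ᵥ A *ᵥ w = v ⬝ᵥ B *ᵥ w) : A = B := by
  ext i j
  have := h (Pi.single i 1) (Pi.single j 1)
  simpa [Matrix.mulVec, dotProduct, Pi.single_apply, Finset.sum_ite_eq,
    Finset.sum_ite_eq'] using this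

lemma matrix_prod_ext {m : ℕ} {M N : Matrix (Fin m) (Fin m) (ℝ × ℝ)}
    (h1 : M.map Prod.fst = N.map Prod.fst) (h2 : M.map Prod.snd = N.map Prod.snd) : M = N := by
  ext i j
  · exact congrFun (congrFun h1 i) j
  · exact congrFun (congrFun h2 i) j

lemma map_fst_mul {m : ℕ} (M N : Matrix (Fin m) (Fin m) (ℝ × ℝ)) :
    (M * N).map Prod.fst = M.map Prod.fst * N.map Prod.fst :=
  Matrix.map_mul (f := RingHom.fst ℝ ℝ)

lemma map_snd_mul {m : ℕ} (M N : Matrix (Fin m) (Fin m) (ℝ × ℝ)) :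
    (M * N).map Prod.snd = M.map Prod.snd * N.map Prod.snd :=
  Matrix.map_mul (f := RingHom.snd ℝ ℝ)

lemma Psi_map_fst {m : ℕ} (A : Matrix.GeneralLinearGroup (Fin m) ℝ) :
    (Psi m A).map Prod.fst = (A : Matrix (Fin m) (Fin m) ℝ) := rfl

lemma Psi_map_snd {m : ℕ} (A : Matrix.GeneralLinearGroup (Fin m) ℝ) :
    (Psi m A).map Prod.snd =
      Qmat m * ((A⁻¹ : Matrix.GeneralLinearGroup (Fin m) ℝ) : Matrix (Fin m) (Fin m) ℝ)ᵀ *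
        Qmat m := rfl

lemma fst_mulVec {m : ℕ} (M : Matrix (Fin m) (Fin m) (ℝ × ℝ)) (z : Fin m → ℝ × ℝ) :
    (fun i => (M.mulVec z i).1) = (M.map Prod.fst).mulVec (fun i => (z i).1) := by
  funext i
  simp only [Matrix.mulVec, dotProduct, Matrix.map_apply]
  rw [Prod.fst_sum]
  rfl

lemma snd_mulVec {m : ℕ} (M : Matrix (Fin m) (Fin m) (ℝ × ℝ)) (z : Fin m → ℝ × ℝ) :
    (fun i => (M.mulVec z i).2) = (M.map Prod.snd).mulVec (fun i => (z i).2) := by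
  funext i
  simp only [Matrix.mulVec, dotProduct, Matrix.map_apply]
  rw [Prod.snd_sum]
  rfl

lemma key_dot {m : ℕ} (A B : Matrix (Fin m) (Fin m) ℝ) (v w : Fin m → ℝ) :
    (A *ᵥ v) ⬝ᵥ ((Qmat m * B) *ᵥ w) = v ⬝ᵥ ((Aᵀ * (Qmat m * B)) *ᵥ w) := by
  rw [← Matrix.vecMul_transpose, ← Matrix.dotProduct_mulVec, Matrix.mulVec_mulVec]

lemma paraq_mulVec {m : ℕ} (M : Matrix (Fin m) (Fin m) (ℝ × ℝ)) (z z' : Fin m → ℝ × ℝ) :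
    paraq m (M.mulVec z) (M.mulVec z') =
      ((fun i => (z i).1) ⬝ᵥ
        (((M.map Prod.fst)ᵀ * (Qmat m * M.map Prod.snd)) *ᵥ (fun i => (z' i).2)),
       (fun i => (z i).2) ⬝ᵥ
        (((M.map Prod.snd)ᵀ * (Qmat m * M.map Prod.fst)) *ᵥ (fun i => (z' i).1))) := by
  unfold paraq
  rw [fst_mulVec, snd_mulVec, fst_mulVec, snd_mulVec]
  rw [Matrix.mulVec_mulVec, Matrix.mulVec_mulVec, key_dot, key_dot]

lemma unit1 {m : ℕ} (A : Matrix.GeneralLinearGroup (Fin m) ℝ) :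
    ((A : Matrix (Fin m) (Fin m) ℝ))ᵀ *
      (Qmat m * (Qmat m * ((A⁻¹ : Matrix.GeneralLinearGroup (Fin m) ℝ) :
        Matrix (Fin m) (Fin m) ℝ)ᵀ * Qmat m)) = Qmat m := by
  have hA : ((A⁻¹ : Matrix.GeneralLinearGroup (Fin m) ℝ) : Matrix (Fin m) (Fin m) ℝ) *
      (A : Matrix (Fin m) (Fin m) ℝ) = 1 := A.inv_mul
  simp only [mul_assoc]
  rw [← mul_assoc (Qmat m) (Qmat m), Qmat_mul_Qmat, one_mul, ← mul_assoc,
    ← Matrix.transpose_mul, hA, Matrix.transpose_one, one_mul]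

lemma unit2 {m : ℕ} (A : Matrix.GeneralLinearGroup (Fin m) ℝ) :
    (Qmat m * ((A⁻¹ : Matrix.GeneralLinearGroup (Fin m) ℝ) :
        Matrix (Fin m) (Fin m) ℝ)ᵀ * Qmat m)ᵀ *
      (Qmat m * (A : Matrix (Fin m) (Fin m) ℝ)) = Qmat m := by
  have hA : ((A⁻¹ : Matrix.GeneralLinearGroup (Fin m) ℝ) : Matrix (Fin m) (Fin m) ℝ) *
      (A : Matrix (Fin m) (Fin m) ℝ) = 1 := A.inv_mul
  simp only [Matrix.transpose_mul, Matrix.transpose_transpose, Qmat_transpose]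
  simp only [mul_assoc]
  rw [← mul_assoc (Qmat m) (Qmat m), Qmat_mul_Qmat, one_mul, hA, mul_one]

lemma Psi_one {m : ℕ} : Psi m 1 = 1 := by
  apply matrix_prod_ext
  · rw [Psi_map_fst, Units.val_one]
    exact (Matrix.map_one _ rfl rfl).symm
  · rw [Psi_map_snd, inv_one]
    show Qmat m * (1 : Matrix (Fin m) (Fin m) ℝ)ᵀ * Qmat m =
      (1 : Matrix (Fin m) (Fin m) (ℝ × ℝ)).map Prod.snd
    rw [Matrix.transpose_one, mul_one, Qmat_mul_Qmat]
    exact (Matrix.map_one _ rfl rfl).symm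

lemma Psi_mul {m : ℕ} (A B : Matrix.GeneralLinearGroup (Fin m) ℝ) :
    Psi m (A * B) = Psi m A * Psi m B := by
  apply matrix_prod_ext
  · rw [map_fst_mul, Psi_map_fst, Psi_map_fst, Psi_map_fst]
    rfl
  · rw [map_snd_mul, Psi_map_snd, Psi_map_snd, Psi_map_snd, _root_.mul_inv_rev]
    show Qmat m *
        (((B⁻¹ : Matrix.GeneralLinearGroup (Fin m) ℝ) : Matrix (Fin m) (Fin m) ℝ) *
          ((A⁻¹ : Matrix.GeneralLinearGroup (Fin m) ℝ) : Matrix (Fin m) (Fin m) ℝ))ᵀ *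
        Qmat m = _
    rw [Matrix.transpose_mul]
    simp only [mul_assoc]
    rw [← mul_assoc (Qmat m) (Qmat m), Qmat_mul_Qmat, one_mul]

/-- For `n ≥ 1`, the map `Ψ(A) = A e₊ + Q(A⁻¹)ᵗQ e₋` is an injective group homomorphism
from `GL(n+1, ℝ)` into the invertible matrices over `ℝ_τ ≅ ℝ × ℝ`, whose image is exactly
the unitary group `U(n+1, ℝ_τ, Q)` of invertible matrices preserving the para-Hermitian
form `q`; in particular `Ψ` is a group isomorphism onto `U(n+1, ℝ_τ, Q)`. -/
theorem Psi_injective_hom_range_unitary (n : ℕ) (hn : 1 ≤ n) :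
    Function.Injective (Psi (n + 1)) ∧
    (∀ A B : Matrix.GeneralLinearGroup (Fin (n + 1)) ℝ,
      Psi (n + 1) (A * B) = Psi (n + 1) A * Psi (n + 1) B) ∧
    Set.range (Psi (n + 1)) =
      {M : Matrix (Fin (n + 1)) (Fin (n + 1)) (ℝ × ℝ) | IsUnit M ∧
        ∀ z z' : Fin (n + 1) → ℝ × ℝ,
          paraq (n + 1) (M.mulVec z) (M.mulVec z') = paraq (n + 1) z z'} := by
  refine ⟨?_, fun A B => Psi_mul A B, ?_⟩
  · intro A B h
    apply Units.ext
    exact congrArg (fun M => Matrix.map M Prod.fst) h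
  · ext M
    constructor
    · rintro ⟨A, rfl⟩
      refine ⟨⟨⟨Psi (n + 1) A, Psi (n + 1) A⁻¹, ?_, ?_⟩, rfl⟩, ?_⟩
      · rw [← Psi_mul, mul_inv_cancel, Psi_one]
      · rw [← Psi_mul, inv_mul_cancel, Psi_one]
      · intro z z'
        rw [paraq_mulVec, Psi_map_fst, Psi_map_snd]
        rw [unit1, unit2]
        rfl
    · rintro ⟨hu, hq⟩
      set M₁ := M.map Prod.fst with hM₁
      set M₂ := M.map Prod.snd with hM₂
      have h1 : M₁ᵀ * (Qmat (n + 1) * M₂) = Qmat (n + 1) := by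
        apply bilin_eq
        intro v w
        have := congrArg Prod.fst (hq (fun i => (v i, 0)) (fun i => ((0 : ℝ), w i)))
        rw [paraq_mulVec] at this
        simpa [paraq] using this
      have hQdet : IsUnit (Qmat (n + 1)).det :=
        Matrix.isUnit_det_of_right_inverse (Qmat_mul_Qmat (n + 1))
      have hdet : IsUnit M₁.det := by
        rw [isUnit_iff_ne_zero]
        intro h0
        have := congrArg Matrix.det h1
        rw [Matrix.det_mul, Matrix.det_transpose, h0, zero_mul] at this
        exact hQdet.ne_zero this.symm
      have hdetT : IsUnit M₁ᵀ.det := by rwa [Matrix.det_transpose]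
      have hM2 : M₂ = Qmat (n + 1) * ((M₁ᵀ)⁻¹ * Qmat (n + 1)) := by
        have h5 : Qmat (n + 1) * ((M₁ᵀ)⁻¹ * (M₁ᵀ * (Qmat (n + 1) * M₂))) =
            Qmat (n + 1) * ((M₁ᵀ)⁻¹ * Qmat (n + 1)) := by rw [h1]
        rwa [Matrix.nonsing_inv_mul_cancel_left _ _ hdetT, ← mul_assoc,
          Qmat_mul_Qmat, one_mul] at h5
      refine ⟨M₁.nonsingInvUnit hdet, ?_⟩
      apply matrix_prod_ext
      · rw [Psi_map_fst]
        rfl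
      · rw [Psi_map_snd]
        show Qmat (n + 1) * (M₁⁻¹)ᵀ * Qmat (n + 1) = M₂
        rw [hM2, Matrix.transpose_nonsing_inv, mul_assoc]
end

section
/- Fix an integer n ≥ 1 and let S₀ := {(v, w) ∈ ℝ^{n+1} × ℝ^{n+1} : v ≠ 0, w ≠ 0, vᵗQw = 0}, equipped with the (ℝˣ × ℝˣ)-action (t, s)·(v, w) := (t v, s w) (scalar multiplication by invertible para-complex numbers). Then the assignment (v, w) ↦ (ℝ·v, {x ∈ ℝ^{n+1} : xᵗQw = 0}) descends to a well-defined bijection from the quotient S₀/(ℝˣ × ℝˣ) onto the set of full flags (ℓ, H) in ℝ^{n+1}, i.e. pairs consisting of a 1-dimensional linear subspace ℓ and an n-dimensional linear subspace H with ℓ ⊆ H. This is the model of the boundary at infinity ∂∞ℍ_τ^n of the para-complex hyperbolic space as the flag manifold. -/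
open Matrix

/-- The linear functional `x ↦ x ⬝ᵥ c` on `ℝᵐ`. -/
noncomputable def dotFun {m : ℕ} (c : Fin m → ℝ) : (Fin m → ℝ) →ₗ[ℝ] ℝ where
  toFun x := x ⬝ᵥ c
  map_add' x y := by simp [add_dotProduct]
  map_smul' r x := by simp [smul_dotProduct]

/-!
A pair `(v, w)` gives the line `ℝ v` and the hyperplane `ker (x ↦ x ⬝ᵥ Q w)`, and isotropy
`v ⬝ᵥ Q w = 0` says exactly that the line lies in the hyperplane. A line determines a spanning
vector up to `ℝˣ`, a hyperplane is the kernel of a nonzero functional determined up to `ℝˣ`,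
every functional on `ℝⁿ⁺¹` is `x ↦ x ⬝ᵥ c` for a unique `c`, and `Q` is invertible (it is the
permutation matrix reversing coordinates), so `w` is determined up to `ℝˣ` as well.
-/

open Module

namespace Module.Dual

variable {K V : Type*} [Field K] [AddCommGroup V] [Module K V] [FiniteDimensional K V]

theorem exists_unit_smul_eq_of_ker_eq {f g : Dual K V} (hf : f ≠ 0)
    (h : LinearMap.ker f = LinearMap.ker g) : ∃ a : Kˣ, g = (a : K) • f := by
  obtain ⟨x, hx⟩ : ∃ x, f x ≠ 0 := by simpa [DFunLike.ne_iff] using hf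
  have hgx : g x ≠ 0 := by rwa [ne_eq, ← LinearMap.mem_ker, ← h, LinearMap.mem_ker]
  have ha : g x / f x ≠ 0 := div_ne_zero hgx hx
  refine ⟨Units.mk0 _ ha, (eq_of_ker_eq_of_apply_eq x ?_ ?_ ?_).symm⟩
  · rw [Units.val_mk0, LinearMap.ker_smul _ _ ha, h]
  · simp [div_mul_cancel₀ _ hx]
  · simp [hx, hgx]

theorem exists_ne_zero_ker_eq {H : Submodule K V} (hH : finrank K H + 1 = finrank K V) :
    ∃ f : Dual K V, f ≠ 0 ∧ LinearMap.ker f = H := by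
  have hlt : H < ⊤ := by
    refine lt_top_iff_ne_top.2 fun hTop => ?_
    rw [hTop, finrank_top] at hH
    omega
  obtain ⟨f, hf, hle⟩ := H.exists_le_ker_of_lt_top hlt
  refine ⟨f, hf, (Submodule.eq_of_le_of_finrank_eq hle ?_).symm⟩
  have := finrank_ker_add_one_of_ne_zero hf
  omega

end Module.Dual

section dotFun

variable {m : ℕ}

@[simp]
theorem dotFun_apply (c x : Fin m → ℝ) : dotFun c x = x ⬝ᵥ c := rfl

@[simp]
theorem dotFun_zero : dotFun (0 : Fin m → ℝ) = 0 := by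
  ext x
  simp

theorem dotFun_smul (a : ℝ) (c : Fin m → ℝ) : dotFun (a • c) = a • dotFun c := by
  ext x
  simp

theorem dotFun_injective : Function.Injective (dotFun (m := m)) := fun c c' h => by
  funext i
  simpa using LinearMap.congr_fun h (Pi.single i 1)

theorem dotFun_surjective : Function.Surjective (dotFun (m := m)) := fun φ =>
  ⟨fun i => φ fun j => if i = j then 1 else 0,
    LinearMap.ext fun x => by simp [φ.pi_apply_eq_sum_univ x, dotProduct]⟩

theorem dotFun_ne_zero {c : Fin m → ℝ} (hc : c ≠ 0) : dotFun c ≠ 0 :=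
  dotFun_zero (m := m) ▸ dotFun_injective.ne hc

theorem finrank_ker_dotFun {c : Fin (m + 1) → ℝ} (hc : c ≠ 0) :
    finrank ℝ (LinearMap.ker (dotFun c)) = m := by
  simpa using Dual.finrank_ker_add_one_of_ne_zero (dotFun_ne_zero hc)

theorem ker_dotFun_eq_ker_dotFun_iff {c c' : Fin m → ℝ} (hc : c ≠ 0) :
    LinearMap.ker (dotFun c) = LinearMap.ker (dotFun c') ↔ ∃ s : ℝˣ, c' = (s : ℝ) • c := by
  constructor
  · intro h
    obtain ⟨s, hs⟩ := Dual.exists_unit_smul_eq_of_ker_eq (dotFun_ne_zero hc) h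
    exact ⟨s, dotFun_injective (by rw [hs, dotFun_smul])⟩
  · rintro ⟨s, rfl⟩
    rw [dotFun_smul, LinearMap.ker_smul _ _ s.ne_zero]

theorem exists_ker_dotFun_eq {H : Submodule ℝ (Fin (m + 1) → ℝ)} (hH : finrank ℝ H = m) :
    ∃ c ≠ 0, LinearMap.ker (dotFun c) = H := by
  obtain ⟨φ, hφ, hker⟩ := Dual.exists_ne_zero_ker_eq (H := H) (by simp [hH])
  obtain ⟨c, rfl⟩ := dotFun_surjective φ
  exact ⟨c, fun hc => hφ (hc ▸ dotFun_zero), hker⟩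

end dotFun

section Qmat

variable {m : ℕ}

theorem Qmat_eq_permMatrix_revPerm : Qmat m = Fin.revPerm.permMatrix ℝ := by
  ext i j
  simp only [Qmat, of_apply, PEquiv.toMatrix_apply, Equiv.toPEquiv_apply, Option.mem_def,
    Option.some.injEq, Fin.revPerm_apply, Fin.ext_iff, Fin.val_rev]
  congr 1
  apply propext
  omega

theorem Qmat_mulVec (w : Fin m → ℝ) : Qmat m *ᵥ w = w ∘ Fin.rev := by
  rw [Qmat_eq_permMatrix_revPerm, permMatrix_mulVec]
  rfl

theorem Qmat_mulVec_Qmat_mulVec (w : Fin m → ℝ) : Qmat m *ᵥ (Qmat m *ᵥ w) = w := by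
  simp [Qmat_mulVec, Function.comp_def]

theorem Qmat_mulVec_injective : Function.Injective (Qmat m *ᵥ ·) :=
  Function.LeftInverse.injective Qmat_mulVec_Qmat_mulVec

theorem Qmat_mulVec_ne_zero {w : Fin m → ℝ} (hw : w ≠ 0) : Qmat m *ᵥ w ≠ 0 :=
  mulVec_zero (Qmat m) ▸ Qmat_mulVec_injective.ne hw

end Qmat

def isotropicPairs (n : ℕ) : Set ((Fin (n + 1) → ℝ) × (Fin (n + 1) → ℝ)) :=
  {p | p.1 ≠ 0 ∧ p.2 ≠ 0 ∧ p.1 ⬝ᵥ Qmat (n + 1) *ᵥ p.2 = 0}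

noncomputable def flagOf {n : ℕ} (p : (Fin (n + 1) → ℝ) × (Fin (n + 1) → ℝ)) :
    Submodule ℝ (Fin (n + 1) → ℝ) × Submodule ℝ (Fin (n + 1) → ℝ) :=
  (Submodule.span ℝ {p.1}, LinearMap.ker (dotFun (Qmat (n + 1) *ᵥ p.2)))

variable {n : ℕ}

theorem flagOf_isFlag {p : (Fin (n + 1) → ℝ) × (Fin (n + 1) → ℝ)} (hp : p ∈ isotropicPairs n) :
    finrank ℝ (flagOf p).1 = 1 ∧ finrank ℝ (flagOf p).2 = n ∧ (flagOf p).1 ≤ (flagOf p).2 :=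
  ⟨finrank_span_singleton hp.1, finrank_ker_dotFun (Qmat_mulVec_ne_zero hp.2.1),
    (Submodule.span_singleton_le_iff_mem _ _).2 hp.2.2⟩

theorem flagOf_eq_flagOf_iff {p p' : (Fin (n + 1) → ℝ) × (Fin (n + 1) → ℝ)} (hw : p.2 ≠ 0) :
    flagOf p = flagOf p' ↔ ∃ t s : ℝˣ, p' = ((t : ℝ) • p.1, (s : ℝ) • p.2) := by
  simp only [flagOf, Prod.ext_iff, Submodule.span_singleton_eq_span_singleton,
    ker_dotFun_eq_ker_dotFun_iff (Qmat_mulVec_ne_zero hw), ← mulVec_smul,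
    Qmat_mulVec_injective.eq_iff, Units.smul_def, exists_and_left, exists_and_right]
  simp only [eq_comm (b := p'.1)]

theorem exists_mem_isotropicPairs_flagOf_eq {ℓ H : Submodule ℝ (Fin (n + 1) → ℝ)}
    (hℓ : finrank ℝ ℓ = 1) (hH : finrank ℝ H = n) (hℓH : ℓ ≤ H) :
    ∃ p ∈ isotropicPairs n, flagOf p = (ℓ, H) := by
  obtain ⟨v, hvℓ, hv⟩ := ℓ.exists_mem_ne_zero_of_ne_bot fun h => by
    rw [h, finrank_bot] at hℓ
    exact zero_ne_one hℓ
  obtain ⟨c, hc, hcH⟩ := exists_ker_dotFun_eq hH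
  have hvc : v ∈ LinearMap.ker (dotFun c) := hcH ▸ hℓH hvℓ
  refine ⟨(v, Qmat (n + 1) *ᵥ c), ⟨hv, Qmat_mulVec_ne_zero hc, ?_⟩, ?_⟩
  · rwa [Qmat_mulVec_Qmat_mulVec]
  · rw [flagOf, Qmat_mulVec_Qmat_mulVec, hcH,
      ← eq_span_singleton_of_mem_of_finrank_eq_one hℓ hvℓ hv]

theorem boundary_flag_model_general (n : ℕ) :
    letI S₀ : Set ((Fin (n + 1) → ℝ) × (Fin (n + 1) → ℝ)) :=
      {p | p.1 ≠ 0 ∧ p.2 ≠ 0 ∧ p.1 ⬝ᵥ (Qmat (n + 1)).mulVec p.2 = 0}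
    letI F : ((Fin (n + 1) → ℝ) × (Fin (n + 1) → ℝ)) →
        Submodule ℝ (Fin (n + 1) → ℝ) × Submodule ℝ (Fin (n + 1) → ℝ) :=
      fun p => (Submodule.span ℝ {p.1}, LinearMap.ker (dotFun ((Qmat (n + 1)).mulVec p.2)))
    -- `F` maps `S₀` into the set of full flags
    (∀ p ∈ S₀, Module.finrank ℝ ↥(F p).1 = 1 ∧ Module.finrank ℝ ↥(F p).2 = n ∧
      (F p).1 ≤ (F p).2) ∧
    -- `F` is invariant under the action and injective on the quotient
    (∀ p ∈ S₀, ∀ p' ∈ S₀,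
      (F p = F p' ↔ ∃ t s : ℝˣ, p' = ((t : ℝ) • p.1, (s : ℝ) • p.2))) ∧
    -- `F` is surjective onto the set of full flags
    (∀ ℓ H : Submodule ℝ (Fin (n + 1) → ℝ),
      Module.finrank ℝ ↥ℓ = 1 → Module.finrank ℝ ↥H = n → ℓ ≤ H →
      ∃ p ∈ S₀, F p = (ℓ, H)) := by
  exact ⟨fun _ hp => flagOf_isFlag hp, fun _ hp _ _ => flagOf_eq_flagOf_iff hp.2.1,
      fun _ _ hℓ hH hℓH => exists_mem_isotropicPairs_flagOf_eq hℓ hH hℓH⟩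

/-- The flag manifold model of the boundary at infinity `∂∞ℍ_τⁿ` of the para-complex
hyperbolic space: the map `(v, w) ↦ (ℝ·v, {x : xᵗQw = 0})` descends to a well-defined
bijection from the quotient of `S₀ = {(v,w) : v ≠ 0, w ≠ 0, vᵗQw = 0}` by the
`(ℝˣ × ℝˣ)`-action `(t,s)·(v,w) = (tv, sw)` onto the set of full flags `(ℓ, H)`
(a line contained in a hyperplane) in `ℝ^{n+1}`. -/
theorem boundary_flag_model (n : ℕ) (hn : 1 ≤ n) :
    letI S₀ : Set ((Fin (n + 1) → ℝ) × (Fin (n + 1) → ℝ)) :=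
      {p | p.1 ≠ 0 ∧ p.2 ≠ 0 ∧ p.1 ⬝ᵥ (Qmat (n + 1)).mulVec p.2 = 0}
    letI F : ((Fin (n + 1) → ℝ) × (Fin (n + 1) → ℝ)) →
        Submodule ℝ (Fin (n + 1) → ℝ) × Submodule ℝ (Fin (n + 1) → ℝ) :=
      fun p => (Submodule.span ℝ {p.1}, LinearMap.ker (dotFun ((Qmat (n + 1)).mulVec p.2)))
    -- `F` maps `S₀` into the set of full flags
    (∀ p ∈ S₀, Module.finrank ℝ ↥(F p).1 = 1 ∧ Module.finrank ℝ ↥(F p).2 = n ∧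
      (F p).1 ≤ (F p).2) ∧
    -- `F` is invariant under the action and injective on the quotient
    (∀ p ∈ S₀, ∀ p' ∈ S₀,
      (F p = F p' ↔ ∃ t s : ℝˣ, p' = ((t : ℝ) • p.1, (s : ℝ) • p.2))) ∧
    -- `F` is surjective onto the set of full flags
    (∀ ℓ H : Submodule ℝ (Fin (n + 1) → ℝ),
      Module.finrank ℝ ↥ℓ = 1 → Module.finrank ℝ ↥H = n → ℓ ≤ H →
      ∃ p ∈ S₀, F p = (ℓ, H)) :=
  boundary_flag_model_general n
end

section
/- Fix an integer m ≥ 1 and set N := 2m+1. Call a real N-dimensional linear subspace W of (ℝ×ℝ)^N (a real vector space of dimension 2N) admissible if Im_τ q vanishes identically on W × W (W is Lagrangian) and Re_τ q is negative definite on W. Then for any two admissible subspaces W₁ and W₂ there exist a matrix M ∈ SU(N, ℝ_τ, Q) and a unit para-complex scalar u = (s, t) with s·t = 1 such that M(W₁) = u·W₂ := {u·z : z ∈ W₂}. (This is the transitivity of SL(2m+1,ℝ) ≅ SU(2m+1, ℝ_τ, Q) on the space 𝒩 of totally geodesic Lagrangian negative definite subspaces of the para-complex hyperbolic space ℍ_τ^{2m},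 which realizes 𝒩 as the symmetric space SL(2m+1,ℝ)/SO(2m+1).) -/
open Matrix

/-- The real part `Re_τ q` of the para-Hermitian form. -/
noncomputable def Retau (n : ℕ) (z z' : Fin n → ℝ × ℝ) : ℝ :=
  ((paraq n z z').1 + (paraq n z z').2) / 2

/-- The τ-imaginary part `Im_τ q` of the para-Hermitian form. -/
noncomputable def Imtau (n : ℕ) (z z' : Fin n → ℝ × ℝ) : ℝ :=
  ((paraq n z z').1 - (paraq n z z').2) / 2

/-- A real `N`-dimensional subspace of `ℝ_τ^N ≅ (ℝ×ℝ)^N` is admissible if it is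
Lagrangian for `Im_τ q` and `Re_τ q` is negative definite on it. -/
def IsAdmissible (N : ℕ) (W : Submodule ℝ (Fin N → ℝ × ℝ)) : Prop :=
  Module.finrank ℝ ↥W = N ∧
  (∀ z ∈ W, ∀ z' ∈ W, Imtau N z z' = 0) ∧
  (∀ z ∈ W, z ≠ 0 → Retau N z z < 0)

/-! An admissible subspace projects isomorphically onto its first components, so it is a graph
`{(v, Q A v)}`; the Lagrangian condition makes `A` symmetric and negative definiteness of `Re_τ q`
makes `-A` positive definite. For `P ∈ SL(N, ℝ)` the pair `(P, Q P⁻ᵀ Q)` lies in `SU(N, ℝ_τ, Q)`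
and carries the graph of `Q A` to that of `Q P⁻ᵀ A P⁻¹`, while a unit scalar `(s, t)` carries it to
that of `t² Q A`. It remains to see that two positive definite matrices `X`, `Y` are congruent up
to a positive factor by a matrix of determinant one: writing `X = Cᵀ C` and `Y = Dᵀ D`, the matrix
`C⁻¹ D` does it, and a positive multiple of it has determinant one. -/

namespace Matrix

theorem mulVec_dotProduct_mulVec_mulVec {ι α : Type*} [Fintype ι] [CommSemiring α]
    (P M R : Matrix ι ι α) (v w : ι → α) :
    P *ᵥ v ⬝ᵥ M *ᵥ R *ᵥ w = v ⬝ᵥ (Pᵀ * M * R) *ᵥ w := by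
  rw [dotProduct_comm, dotProduct_mulVec, ← mulVec_transpose, dotProduct_comm]
  simp only [mulVec_mulVec, Matrix.mul_assoc]

theorem isSymm_of_dotProduct_mulVec_comm {ι α : Type*} [Fintype ι] [DecidableEq ι]
    [CommSemiring α] {A : Matrix ι ι α} (h : ∀ v w, v ⬝ᵥ A *ᵥ w = w ⬝ᵥ A *ᵥ v) : A.IsSymm :=
  IsSymm.ext fun i j => by
    simpa [mulVec_single, single_dotProduct] using h (Pi.single j 1) (Pi.single i 1)

namespace PosDef

variable {ι : Type*} [Fintype ι] [DecidableEq ι] {A B : Matrix ι ι ℝ}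

open scoped MatrixOrder in
theorem exists_transpose_mul_self_eq (hA : A.PosDef) :
    ∃ C : Matrix ι ι ℝ, 0 < C.det ∧ Cᵀ * C = A := by
  have hC : (CFC.sqrt A).PosSemidef := (CFC.sqrt_nonneg A).posSemidef
  have hCt : (CFC.sqrt A)ᵀ = CFC.sqrt A := by
    simpa [conjTranspose_eq_transpose_of_trivial] using hC.isHermitian.eq
  have hCC : CFC.sqrt A * CFC.sqrt A = A := CFC.sqrt_mul_sqrt_self A hA.posSemidef.nonneg
  refine ⟨CFC.sqrt A, ?_, by rw [hCt, hCC]⟩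
  have hdet : (CFC.sqrt A).det * (CFC.sqrt A).det = A.det := by rw [← det_mul, hCC]
  nlinarith [hC.det_nonneg, hA.det_pos]

theorem exists_transpose_mul_mul_eq (hA : A.PosDef) (hB : B.PosDef) :
    ∃ H : Matrix ι ι ℝ, 0 < H.det ∧ Hᵀ * A * H = B := by
  obtain ⟨C, hC, rfl⟩ := hA.exists_transpose_mul_self_eq
  obtain ⟨D, hD, rfl⟩ := hB.exists_transpose_mul_self_eq
  refine ⟨C⁻¹ * D, by simpa [det_nonsing_inv, div_eq_inv_mul] using div_pos hD hC, ?_⟩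
  rw [transpose_mul, transpose_nonsing_inv]
  calc Dᵀ * Cᵀ⁻¹ * (Cᵀ * C) * (C⁻¹ * D) = Dᵀ * (Cᵀ⁻¹ * Cᵀ) * (C * C⁻¹) * D := by
        simp only [Matrix.mul_assoc]
    _ = Dᵀ * D := by
        rw [nonsing_inv_mul _ (by simpa using hC.ne'), mul_nonsing_inv _ hC.ne'.isUnit,
          Matrix.mul_one, Matrix.mul_one]

theorem exists_det_eq_one_transpose_mul_mul_eq_smul [Nonempty ι] (hA : A.PosDef)
    (hB : B.PosDef) : ∃ H : Matrix ι ι ℝ, H.det = 1 ∧ ∃ c : ℝ, 0 < c ∧ Hᵀ * A * H = c • B := by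
  obtain ⟨H, hH, hHAB⟩ := hA.exists_transpose_mul_mul_eq hB
  set μ : ℝ := H.det⁻¹ ^ ((Fintype.card ι : ℝ)⁻¹)
  have hμ : 0 < μ := Real.rpow_pos_of_pos (inv_pos.mpr hH) _
  have hμn : μ ^ Fintype.card ι = H.det⁻¹ :=
    Real.rpow_inv_natCast_pow (inv_pos.mpr hH).le Fintype.card_ne_zero
  refine ⟨μ • H, ?_, μ ^ 2, by positivity, ?_⟩
  · rw [det_smul, hμn, inv_mul_cancel₀ hH.ne']
  · rw [transpose_smul, Matrix.smul_mul, Matrix.mul_smul, Matrix.smul_mul, hHAB, smul_smul, sq]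

end PosDef

end Matrix

namespace ParaHermitian

section Pairs

variable {ι : Type*}

def pairVec (v w : ι → ℝ) : ι → ℝ × ℝ := fun i => (v i, w i)

def pairMatrix (P R : Matrix ι ι ℝ) : Matrix ι ι (ℝ × ℝ) := of fun i j => (P i j, R i j)

def graph [Fintype ι] (S : Matrix ι ι ℝ) : Set (ι → ℝ × ℝ) :=
  Set.range fun v => pairVec v (S *ᵥ v)

theorem pairVec_fst_snd (z : ι → ℝ × ℝ) : pairVec (fun i => (z i).1) (fun i => (z i).2) = z :=
  rfl

theorem smul_pairVec (u : ℝ × ℝ) (v w : ι → ℝ) : u • pairVec v w = pairVec (u.1 • v) (u.2 • w) :=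
  rfl

variable [Fintype ι]

theorem pairMatrix_mulVec_pairVec (P R : Matrix ι ι ℝ) (v w : ι → ℝ) :
    pairMatrix P R *ᵥ pairVec v w = pairVec (P *ᵥ v) (R *ᵥ w) := by
  funext i
  ext <;> simp [pairMatrix, pairVec, mulVec, dotProduct, Prod.fst_sum, Prod.snd_sum]

theorem det_pairMatrix [DecidableEq ι] (P R : Matrix ι ι ℝ) :
    (pairMatrix P R).det = (P.det, R.det) :=
  Prod.ext (RingHom.map_det (RingHom.fst ℝ ℝ) (pairMatrix P R))
    (RingHom.map_det (RingHom.snd ℝ ℝ) (pairMatrix P R))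

theorem image_pairMatrix_mulVec_graph [DecidableEq ι] {P : Matrix ι ι ℝ} (hP : IsUnit P.det)
    (R S : Matrix ι ι ℝ) : (pairMatrix P R *ᵥ ·) '' graph S = graph (R * S * P⁻¹) := by
  have hsurj : Function.Surjective (P *ᵥ ·) :=
    mulVec_surjective_iff_isUnit.mpr ((isUnit_iff_isUnit_det P).mpr hP)
  rw [graph, graph, ← Set.range_comp, ← hsurj.range_comp fun w => pairVec w ((R * S * P⁻¹) *ᵥ w)]
  congr 1
  funext v
  simp [pairMatrix_mulVec_pairVec, mulVec_mulVec, Matrix.mul_assoc, nonsing_inv_mul _ hP]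

theorem image_smul_graph {u : ℝ × ℝ} (hu : u.1 * u.2 = 1) (S : Matrix ι ι ℝ) :
    (u • ·) '' graph S = graph (u.2 ^ 2 • S) := by
  have hsurj : Function.Surjective (u.1 • · : (ι → ℝ) → ι → ℝ) :=
    (MulAction.bijective₀ (left_ne_zero_of_mul_eq_one hu)).surjective
  rw [graph, graph, ← Set.range_comp, ← hsurj.range_comp fun w => pairVec w ((u.2 ^ 2 • S) *ᵥ w)]
  congr 1
  funext v
  rw [Function.comp_apply, Function.comp_apply, smul_pairVec, mulVec_smul, smul_mulVec, smul_smul,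
    show u.1 * u.2 ^ 2 = u.2 by linear_combination u.2 * hu]

theorem exists_eq_graph_of_finrank_eq [DecidableEq ι] {W : Submodule ℝ (ι → ℝ × ℝ)}
    (hdim : Module.finrank ℝ W = Fintype.card ι)
    (hfst : ∀ z ∈ W, (fun i => (z i).1) = 0 → z = 0) :
    ∃ S : Matrix ι ι ℝ, (W : Set (ι → ℝ × ℝ)) = graph S := by
  let fst : (ι → ℝ × ℝ) →ₗ[ℝ] ι → ℝ := (LinearMap.fst ℝ ℝ ℝ).compLeft ι
  let snd : (ι → ℝ × ℝ) →ₗ[ℝ] ι → ℝ := (LinearMap.snd ℝ ℝ ℝ).compLeft ι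
  have hinj : Function.Injective (fst ∘ₗ W.subtype) :=
    (injective_iff_map_eq_zero _).mpr fun z hz => Subtype.ext (hfst z z.2 hz)
  let e := LinearMap.linearEquivOfInjective _ hinj (by simp [hdim])
  let S := LinearMap.toMatrix' (snd ∘ₗ W.subtype ∘ₗ e.symm.toLinearMap)
  have he : ∀ v, (e.symm v : ι → ℝ × ℝ) = pairVec v (S *ᵥ v) := by
    intro v
    rw [← pairVec_fst_snd (e.symm v : ι → ℝ × ℝ)]
    congr 1
    · exact e.apply_symm_apply v
    · exact (LinearMap.toMatrix'_mulVec (snd ∘ₗ W.subtype ∘ₗ e.symm.toLinearMap) v).symm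
  refine ⟨S, Set.ext fun z => ⟨fun hz => ⟨fun i => (z i).1, ?_⟩, ?_⟩⟩
  · change pairVec _ _ = z
    rw [← he]
    exact congrArg Subtype.val (e.symm_apply_eq.mpr rfl : e.symm _ = ⟨z, hz⟩)
  · rintro ⟨v, rfl⟩
    change pairVec v (S *ᵥ v) ∈ W
    exact he v ▸ (e.symm v).2

end Pairs

variable {n : ℕ}

theorem Qmat_transpose : (Qmat n)ᵀ = Qmat n := by
  ext i j
  simp only [Qmat, transpose_apply, of_apply, add_comm (j : ℕ)]

theorem Qmat_mulVec (v : Fin n → ℝ) : Qmat n *ᵥ v = fun i => v i.rev := by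
  funext i
  rw [mulVec, dotProduct, Finset.sum_eq_single i.rev]
  · simp [Qmat, Fin.val_rev]
    omega
  · intro j _ hj
    simp only [Qmat, of_apply, ite_mul, one_mul, zero_mul, ite_eq_right_iff]
    intro h
    exact absurd (Fin.ext (by rw [Fin.val_rev]; omega)) hj
  · simp

theorem Qmat_mul_self : Qmat n * Qmat n = 1 :=
  ext_iff_mulVec.mpr fun v => by simp [← mulVec_mulVec, Qmat_mulVec]

theorem Qmat_mulVec_Qmat_mulVec (v : Fin n → ℝ) : Qmat n *ᵥ Qmat n *ᵥ v = v := by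
  rw [mulVec_mulVec, Qmat_mul_self, one_mulVec]

theorem Qmat_mulVec_dotProduct_mulVec (v w : Fin n → ℝ) :
    Qmat n *ᵥ v ⬝ᵥ Qmat n *ᵥ w = v ⬝ᵥ w := by
  rw [dotProduct_mulVec, ← mulVec_transpose, Qmat_transpose, Qmat_mulVec_Qmat_mulVec]

theorem paraq_pairVec (v w v' w' : Fin n → ℝ) :
    paraq n (pairVec v w) (pairVec v' w') = (v ⬝ᵥ Qmat n *ᵥ w', w ⬝ᵥ Qmat n *ᵥ v') :=
  rfl

theorem paraq_graph_Qmat_mul (A : Matrix (Fin n) (Fin n) ℝ) (v w : Fin n → ℝ) :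
    paraq n (pairVec v ((Qmat n * A) *ᵥ v)) (pairVec w ((Qmat n * A) *ᵥ w)) =
      (v ⬝ᵥ A *ᵥ w, w ⬝ᵥ A *ᵥ v) := by
  simp only [paraq_pairVec, ← mulVec_mulVec, Qmat_mulVec_Qmat_mulVec,
    Qmat_mulVec_dotProduct_mulVec, dotProduct_comm (A *ᵥ v)]

theorem paraq_pairMatrix_mulVec {P R : Matrix (Fin n) (Fin n) ℝ} (h : Pᵀ * Qmat n * R = Qmat n)
    (z z' : Fin n → ℝ × ℝ) :
    paraq n (pairMatrix P R *ᵥ z) (pairMatrix P R *ᵥ z') = paraq n z z' := by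
  have h' : Rᵀ * Qmat n * P = Qmat n := by
    simpa [Matrix.mul_assoc, Qmat_transpose] using congrArg transpose h
  rw [← pairVec_fst_snd z, ← pairVec_fst_snd z', pairMatrix_mulVec_pairVec,
    pairMatrix_mulVec_pairVec, paraq_pairVec, paraq_pairVec, mulVec_dotProduct_mulVec_mulVec,
    mulVec_dotProduct_mulVec_mulVec, h, h']

noncomputable def suOfSL (P : Matrix (Fin n) (Fin n) ℝ) : Matrix (Fin n) (Fin n) (ℝ × ℝ) :=
  pairMatrix P (Qmat n * P⁻¹ᵀ * Qmat n)

theorem paraq_suOfSL_mulVec {P : Matrix (Fin n) (Fin n) ℝ} (hP : IsUnit P.det)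
    (z z' : Fin n → ℝ × ℝ) : paraq n (suOfSL P *ᵥ z) (suOfSL P *ᵥ z') = paraq n z z' := by
  refine paraq_pairMatrix_mulVec ?_ z z'
  rw [transpose_nonsing_inv]
  calc Pᵀ * Qmat n * (Qmat n * Pᵀ⁻¹ * Qmat n) = Pᵀ * (Qmat n * Qmat n) * Pᵀ⁻¹ * Qmat n := by
        simp only [Matrix.mul_assoc]
    _ = Qmat n := by
        rw [Qmat_mul_self, Matrix.mul_one, mul_nonsing_inv _ (by rwa [det_transpose]),
          Matrix.one_mul]

theorem det_suOfSL {P : Matrix (Fin n) (Fin n) ℝ} (hP : P.det = 1) : (suOfSL P).det = 1 := by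
  have hQ : (Qmat n).det * (Qmat n).det = 1 := by rw [← det_mul, Qmat_mul_self, det_one]
  rw [suOfSL, det_pairMatrix, det_mul, det_mul, det_transpose, det_nonsing_inv, hP]
  simp [hQ]

theorem image_suOfSL_mulVec_graph {P : Matrix (Fin n) (Fin n) ℝ} (hP : IsUnit P.det)
    (A : Matrix (Fin n) (Fin n) ℝ) :
    (suOfSL P *ᵥ ·) '' graph (Qmat n * A) = graph (Qmat n * (P⁻¹ᵀ * A * P⁻¹)) := by
  rw [suOfSL, image_pairMatrix_mulVec_graph hP]
  congr 1
  calc Qmat n * P⁻¹ᵀ * Qmat n * (Qmat n * A) * P⁻¹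
      = Qmat n * P⁻¹ᵀ * (Qmat n * Qmat n) * A * P⁻¹ := by simp only [Matrix.mul_assoc]
    _ = Qmat n * (P⁻¹ᵀ * A * P⁻¹) := by
        simp only [Qmat_mul_self, Matrix.mul_one, Matrix.mul_assoc]

theorem _root_.IsAdmissible.exists_eq_graph {W : Submodule ℝ (Fin n → ℝ × ℝ)}
    (h : IsAdmissible n W) : ∃ A : Matrix (Fin n) (Fin n) ℝ,
      (-A).PosDef ∧ (W : Set (Fin n → ℝ × ℝ)) = graph (Qmat n * A) := by
  obtain ⟨hdim, hlag, hneg⟩ := h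
  have hfst : ∀ z ∈ W, (fun i => (z i).1) = 0 → z = 0 := by
    intro z hz h0
    by_contra hz0
    have := hneg z hz hz0
    rw [← pairVec_fst_snd z, h0, Retau, paraq_pairVec] at this
    simp at this
  obtain ⟨S, hS⟩ := exists_eq_graph_of_finrank_eq (by simpa using hdim) hfst
  set A := Qmat n * S
  have hW : (W : Set (Fin n → ℝ × ℝ)) = graph (Qmat n * A) := by
    rw [← Matrix.mul_assoc, Qmat_mul_self, Matrix.one_mul, hS]
  have hmem : ∀ v, pairVec v ((Qmat n * A) *ᵥ v) ∈ W := fun v => by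
    rw [← SetLike.mem_coe, hW]
    exact ⟨v, rfl⟩
  have hsymm : A.IsSymm := isSymm_of_dotProduct_mulVec_comm fun v w => by
    have := hlag _ (hmem v) _ (hmem w)
    rw [Imtau, paraq_graph_Qmat_mul] at this
    linarith
  refine ⟨A, PosDef.of_dotProduct_mulVec_pos (by simpa using hsymm) fun v hv => ?_, hW⟩
  have := hneg _ (hmem v) fun h0 => hv (congrArg (fun z i => (z i).1) h0)
  rw [Retau, paraq_graph_Qmat_mul] at this
  rw [star_trivial, neg_mulVec, dotProduct_neg]
  linarith

end ParaHermitian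

open ParaHermitian in
theorem SU_transitive_on_lagrangian_negative_definite_general (m : ℕ)
    (W₁ W₂ : Submodule ℝ (Fin (2 * m + 1) → ℝ × ℝ))
    (h₁ : IsAdmissible (2 * m + 1) W₁) (h₂ : IsAdmissible (2 * m + 1) W₂) :
    ∃ M : Matrix (Fin (2 * m + 1)) (Fin (2 * m + 1)) (ℝ × ℝ), IsUnit M ∧
      (∀ z z' : Fin (2 * m + 1) → ℝ × ℝ,
        paraq (2 * m + 1) (M.mulVec z) (M.mulVec z') = paraq (2 * m + 1) z z') ∧
      M.det = (1, 1) ∧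
      ∃ u : ℝ × ℝ, u.1 * u.2 = 1 ∧
        (fun z => M.mulVec z) '' (W₁ : Set (Fin (2 * m + 1) → ℝ × ℝ)) =
          (fun z => u • z) '' (W₂ : Set (Fin (2 * m + 1) → ℝ × ℝ)) := by
  obtain ⟨A₁, hA₁, hW₁⟩ := h₁.exists_eq_graph
  obtain ⟨A₂, hA₂, hW₂⟩ := h₂.exists_eq_graph
  obtain ⟨H, hH, c, hc, hHA⟩ := hA₁.exists_det_eq_one_transpose_mul_mul_eq_smul hA₂
  have hHA' : Hᵀ * A₁ * H = c • A₂ := by simpa [Matrix.mul_neg, Matrix.neg_mul] using hHA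
  have hP : (H⁻¹).det = 1 := by simp [hH]
  have hdet : (suOfSL H⁻¹).det = 1 := det_suOfSL hP
  have hu : (√c)⁻¹ * √c = 1 := inv_mul_cancel₀ (Real.sqrt_pos.mpr hc).ne'
  refine ⟨suOfSL H⁻¹, (isUnit_iff_isUnit_det _).mpr (hdet ▸ isUnit_one),
    paraq_suOfSL_mulVec (hP ▸ isUnit_one), hdet, ((√c)⁻¹, √c), hu, ?_⟩
  rw [hW₁, hW₂, image_suOfSL_mulVec_graph (hP ▸ isUnit_one), image_smul_graph hu,
    nonsing_inv_nonsing_inv _ (hH ▸ isUnit_one), Real.sq_sqrt hc.le, hHA', mul_smul_comm]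

/-- `SU(2m+1, ℝ_τ, Q)` acts transitively, up to unit para-complex scalars, on the set of
totally geodesic Lagrangian negative definite subspaces: for admissible `W₁, W₂` there
are a `q`-preserving invertible matrix `M` over `ℝ × ℝ` with determinant `(1,1)` and a
unit para-complex scalar `u` such that `M(W₁) = u·W₂`. -/
theorem SU_transitive_on_lagrangian_negative_definite (m : ℕ) (hm : 1 ≤ m)
    (W₁ W₂ : Submodule ℝ (Fin (2 * m + 1) → ℝ × ℝ))
    (h₁ : IsAdmissible (2 * m + 1) W₁) (h₂ : IsAdmissible (2 * m + 1) W₂) :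
    ∃ M : Matrix (Fin (2 * m + 1)) (Fin (2 * m + 1)) (ℝ × ℝ), IsUnit M ∧
      (∀ z z' : Fin (2 * m + 1) → ℝ × ℝ,
        paraq (2 * m + 1) (M.mulVec z) (M.mulVec z') = paraq (2 * m + 1) z z') ∧
      M.det = (1, 1) ∧
      ∃ u : ℝ × ℝ, u.1 * u.2 = 1 ∧
        (fun z => M.mulVec z) '' (W₁ : Set (Fin (2 * m + 1) → ℝ × ℝ)) =
          (fun z => u • z) '' (W₂ : Set (Fin (2 * m + 1) → ℝ × ℝ)) :=
  SU_transitive_on_lagrangian_negative_definite_general m W₁ W₂ h₁ h₂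
end

section
/- Let β be the Minkowski bilinear form of signature (2,1) on ℝ³ and let ℍ² := {p ∈ ℝ³ : β(p, p) = −1 and p₃ > 0} be the upper sheet of the hyperboloid. Let 𝒫 be the set of pairs (p, L) where p ∈ ℍ² and L is a 1-dimensional linear subspace of ℝ³ with L ⊆ {w : β(w, p) = 0} (so 𝒫 is the projectivized tangent bundle of ℍ²), and let Ω be the set of flags (ℓ, H), with ℓ a 1-dimensional and H a 2-dimensional linear subspace of ℝ³ and ℓ ⊆ H, such that β is positive definite on ℓ and β is positive definite on the β-orthogonal complement H^⊥. Then the map F(p, L) := (L, L + ℝ·p) is a well-defined bijection from 𝒫 onto Ω. (This is the concrete linear-algebraic form of the theorem that, for a Fuchsian representation ρ₀ into SL(3,ℝ), the developing map of the flag structure on the projectivized tangent bundle is a homeomorphism onto the de Sitter component Ω^{dS}_{ρ₀} of the Guichard–Wienhard domain.) -/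
/-- The standard Minkowski bilinear form of signature (2,1) on `ℝ³`. -/
noncomputable def mink (x y : Fin 3 → ℝ) : ℝ := x 0 * y 0 + x 1 * y 1 - x 2 * y 2

/-- The upper sheet of the hyperboloid `{β(p,p) = −1, p₃ > 0}` in Minkowski space `ℝ^{2,1}`. -/
def Hyp2 : Set (Fin 3 → ℝ) := {p | mink p p = -1 ∧ p 2 > 0}

/-- The projectivized tangent bundle of the hyperbolic plane: pairs `(p, L)` with
`p ∈ ℍ²` and `L` a line contained in the Minkowski-orthogonal plane to `p`. -/
def ProjTangent : Set ((Fin 3 → ℝ) × Submodule ℝ (Fin 3 → ℝ)) :=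
  {pL | pL.1 ∈ Hyp2 ∧ Module.finrank ℝ ↥pL.2 = 1 ∧ ∀ w ∈ pL.2, mink w pL.1 = 0}

/-- The set of flags `(ℓ, H)` in `ℝ³` with `ℓ ⊆ H`, `β` positive definite on `ℓ` and on
the `β`-orthogonal complement of `H` (the de Sitter component of the Guichard–Wienhard
domain for a Fuchsian representation). -/
def deSitterFlags : Set (Submodule ℝ (Fin 3 → ℝ) × Submodule ℝ (Fin 3 → ℝ)) :=
  {lH | Module.finrank ℝ ↥lH.1 = 1 ∧ Module.finrank ℝ ↥lH.2 = 2 ∧ lH.1 ≤ lH.2 ∧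
    (∀ x ∈ lH.1, x ≠ 0 → mink x x > 0) ∧
    (∀ x : Fin 3 → ℝ, (∀ h ∈ lH.2, mink x h = 0) → x ≠ 0 → mink x x > 0)}

lemma mink_comm (x y : Fin 3 → ℝ) : mink x y = mink y x := by simp [mink]; ring
lemma mink_add_left (x y z : Fin 3 → ℝ) : mink (x + y) z = mink x z + mink y z := by
  simp [mink]; ring
lemma mink_smul_left (c : ℝ) (x y : Fin 3 → ℝ) : mink (c • x) y = c * mink x y := by
  simp [mink]; ring
lemma mink_smul_right (c : ℝ) (x y : Fin 3 → ℝ) : mink x (c • y) = c * mink x y := by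
  simp [mink]; ring
lemma mink_sub_left (x y z : Fin 3 → ℝ) : mink (x - y) z = mink x z - mink y z := by
  simp [mink]; ring
lemma mink_add_right (x y z : Fin 3 → ℝ) : mink x (y + z) = mink x y + mink x z := by
  simp [mink]; ring
noncomputable def mcross (v u : Fin 3 → ℝ) : Fin 3 → ℝ :=
  ![v 1 * u 2 - v 2 * u 1, v 2 * u 0 - v 0 * u 2, -(v 0 * u 1 - v 1 * u 0)]
lemma mcross_orth_left (v u : Fin 3 → ℝ) : mink (mcross v u) v = 0 := by
  simp [mink, mcross]; ring
lemma mcross_orth_right (v u : Fin 3 → ℝ) : mink (mcross v u) u = 0 := by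
  simp [mink, mcross]; ring
lemma mink_mcross_self (v u : Fin 3 → ℝ) :
    mink (mcross v u) (mcross v u) = (mink v u)^2 - mink v v * mink u u := by
  simp [mink, mcross]; ring
lemma orth_spacelike {p v : Fin 3 → ℝ} (hp : mink p p = -1) (hp2 : 0 < p 2)
    (hv : mink v p = 0) (hv0 : v ≠ 0) : 0 < mink v v := by
  simp only [mink] at hp hv ⊢
  have key : (v 0 * v 0 + v 1 * v 1 - v 2 * v 2) * (p 2)^2
      = (v 0 * p 1 - v 1 * p 0)^2 + v 0^2 + v 1^2 := by
    linear_combination (-(v 0^2) - v 1^2) * hp + (v 0*p 0 + v 1*p 1 + v 2*p 2) * hv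
  have hp2sq : 0 < p 2 ^ 2 := by positivity
  have hm0 : 0 ≤ v 0 * v 0 + v 1 * v 1 - v 2 * v 2 := by
    nlinarith [sq_nonneg (v 0 * p 1 - v 1 * p 0), sq_nonneg (v 0), sq_nonneg (v 1)]
  rcases hm0.lt_or_eq with h | h
  · exact h
  exfalso
  have h0 : v 0 ^ 2 = 0 := by nlinarith [sq_nonneg (v 0 * p 1 - v 1 * p 0), sq_nonneg (v 1)]
  have h1 : v 1 ^ 2 = 0 := by nlinarith [sq_nonneg (v 0 * p 1 - v 1 * p 0), sq_nonneg (v 0)]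
  have h0' : v 0 = 0 := sq_eq_zero_iff.mp h0
  have h1' : v 1 = 0 := sq_eq_zero_iff.mp h1
  have h2' : v 2 = 0 := by
    have : v 2 ^ 2 = 0 := by nlinarith
    exact sq_eq_zero_iff.mp this
  exact hv0 (by funext i; fin_cases i <;> simp [h0', h1', h2'])

lemma exists_gen (L : Submodule ℝ (Fin 3 → ℝ)) (h : Module.finrank ℝ L = 1) :
    ∃ v : Fin 3 → ℝ, v ≠ 0 ∧ L = Submodule.span ℝ {v} := by
  obtain ⟨v, hv⟩ := ((Submodule.finrank_le_one_iff_isPrincipal L).mp h.le).principal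
  refine ⟨v, ?_, hv⟩
  rintro rfl
  rw [Submodule.span_zero_singleton] at hv
  rw [hv, finrank_bot] at h
  simp at h

-- MapsTo
lemma maps_to : Set.MapsTo
    (fun pL : (Fin 3 → ℝ) × Submodule ℝ (Fin 3 → ℝ) =>
      (pL.2, pL.2 ⊔ Submodule.span ℝ {pL.1}))
    ProjTangent deSitterFlags := by
  rintro ⟨p, L⟩ ⟨⟨hpp, hp2⟩, hL1, horth⟩
  have hpL : p ∉ L := by
    intro hpL
    have := horth p hpL
    rw [hpp] at this; norm_num at this
  have hp0 : p ≠ 0 := by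
    intro h
    rw [h] at hpp; simp [mink] at hpp
  have hinf : L ⊓ Submodule.span ℝ {p} = ⊥ := by
    rw [Submodule.eq_bot_iff]
    rintro x ⟨hxL, hxS⟩
    obtain ⟨c, rfl⟩ := Submodule.mem_span_singleton.mp hxS
    have := horth _ hxL
    rw [mink_smul_left, hpp] at this
    have hc : c = 0 := by linarith
    simp [hc]
  have hrank : Module.finrank ℝ ↥(L ⊔ Submodule.span ℝ {p}) = 2 := by
    have := Submodule.finrank_sup_add_finrank_inf_eq L (Submodule.span ℝ {p})
    rw [hinf, hL1, finrank_span_singleton hp0, finrank_bot] at this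
    omega
  refine ⟨hL1, hrank, le_sup_left, ?_, ?_⟩
  · intro x hx hx0
    exact orth_spacelike hpp hp2 (horth x hx) hx0
  · intro x hx hx0
    have hxp : mink x p = 0 :=
      hx p (Submodule.mem_sup_right (Submodule.mem_span_singleton_self p))
    exact orth_spacelike hpp hp2 hxp hx0

-- InjOn
lemma inj_on : Set.InjOn
    (fun pL : (Fin 3 → ℝ) × Submodule ℝ (Fin 3 → ℝ) =>
      (pL.2, pL.2 ⊔ Submodule.span ℝ {pL.1}))
    ProjTangent := by
  rintro ⟨p, L⟩ ⟨⟨hpp, hp2⟩, hL1, horthp⟩ ⟨q, M⟩ ⟨⟨hqq, hq2⟩, hM1, horthq⟩ heq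
  simp only [Prod.mk.injEq] at heq
  obtain ⟨hLM, hH⟩ := heq
  subst hLM
  have hqmem : q ∈ L ⊔ Submodule.span ℝ {p} := by
    rw [hH]
    exact Submodule.mem_sup_right (Submodule.mem_span_singleton_self q)
  obtain ⟨w, hw, z, hz, hsum⟩ := Submodule.mem_sup.mp hqmem
  obtain ⟨c, rfl⟩ := Submodule.mem_span_singleton.mp hz
  have hwq : mink w q = 0 := horthq w hw
  have hwp : mink w p = 0 := horthp w hw
  have hww : mink w w = 0 := by
    rw [← hsum, mink_add_right, mink_smul_right, hwp] at hwq
    linarith [hwq]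
  have hw0 : w = 0 := by
    by_contra hw0
    have := orth_spacelike hpp hp2 hwp hw0
    linarith
  rw [hw0, zero_add] at hsum
  have hc2 : c ^ 2 = 1 := by
    have : mink (c • p) (c • p) = -1 := by rw [hsum]; exact hqq
    rw [mink_smul_left, mink_smul_right, hpp] at this
    nlinarith
  have hcpos : 0 < c := by
    have : q 2 = c * p 2 := by rw [← hsum]; simp
    nlinarith
  have hc1 : c = 1 := by nlinarith
  have : p = q := by rw [← hsum, hc1, one_smul]
  simp [Prod.ext_iff, this]

lemma surj_on : Set.SurjOn
    (fun pL : (Fin 3 → ℝ) × Submodule ℝ (Fin 3 → ℝ) =>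
      (pL.2, pL.2 ⊔ Submodule.span ℝ {pL.1}))
    ProjTangent deSitterFlags := by
  rintro ⟨l, H⟩ ⟨hl1, hH2, hlH, hpos, hperp⟩
  obtain ⟨v, hv0, hlv⟩ := exists_gen l hl1
  have hvl : v ∈ l := hlv ▸ Submodule.mem_span_singleton_self v
  have ha : 0 < mink v v := hpos v hvl hv0
  have hlneH : l ≠ H := by
    intro h; rw [h, hH2] at hl1; omega
  obtain ⟨u, huH, hul⟩ := SetLike.exists_of_lt (hlH.lt_of_ne hlneH)
  set a := mink v v with ha_def
  set b := mink u v with hb_def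
  set u' : Fin 3 → ℝ := a • u - b • v with hu'_def
  have hu'H : u' ∈ H := H.sub_mem (H.smul_mem _ huH) (H.smul_mem _ (hlH hvl))
  have hu'v : mink u' v = 0 := by
    rw [hu'_def, mink_sub_left, mink_smul_left, mink_smul_left]
    ring
  have hvu' : mink v u' = 0 := by rw [mink_comm]; exact hu'v
  have hu'l : u' ∉ l := by
    intro h
    rw [hlv] at h
    obtain ⟨c, hc⟩ := Submodule.mem_span_singleton.mp h
    apply hul
    rw [hlv]
    refine Submodule.mem_span_singleton.mpr ⟨a⁻¹ * (c + b), ?_⟩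
    have hau : a • u = (c + b) • v := by
      have : a • u - b • v = c • v := hc.symm
      rw [sub_eq_iff_eq_add] at this
      rw [this, ← add_smul]
    rw [mul_smul, ← hau, smul_smul, inv_mul_cancel₀ ha.ne', one_smul]
  have hu'0 : u' ≠ 0 := fun h => hu'l (h ▸ l.zero_mem)
  -- H = l ⊔ span u'
  have hle : l ⊔ Submodule.span ℝ {u'} ≤ H :=
    sup_le hlH ((Submodule.span_singleton_le_iff_mem u' H).mpr hu'H)
  have hinf : l ⊓ Submodule.span ℝ {u'} = ⊥ := by
    rw [Submodule.eq_bot_iff]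
    rintro x ⟨hxl, hxS⟩
    obtain ⟨c, rfl⟩ := Submodule.mem_span_singleton.mp hxS
    rcases eq_or_ne c 0 with rfl | hc
    · simp
    · exfalso
      apply hu'l
      have : u' = c⁻¹ • (c • u') := by rw [smul_smul, inv_mul_cancel₀ hc, one_smul]
      rw [this]
      exact l.smul_mem _ hxl
  have hranksup : Module.finrank ℝ ↥(l ⊔ Submodule.span ℝ {u'}) = 2 := by
    have := Submodule.finrank_sup_add_finrank_inf_eq l (Submodule.span ℝ {u'})
    rw [hinf, hl1, finrank_span_singleton hu'0, finrank_bot] at this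
    omega
  have HeqSup : H = l ⊔ Submodule.span ℝ {u'} :=
    (Submodule.eq_of_le_of_finrank_eq hle (by rw [hranksup, hH2])).symm
  -- orthogonality to all of H
  have horthH : ∀ x : Fin 3 → ℝ, mink x v = 0 → mink x u' = 0 → ∀ h ∈ H, mink x h = 0 := by
    intro x hxv hxu h hh
    rw [HeqSup] at hh
    obtain ⟨y, hy, z, hz, hsum⟩ := Submodule.mem_sup.mp hh
    rw [hlv] at hy
    obtain ⟨c, rfl⟩ := Submodule.mem_span_singleton.mp hy
    obtain ⟨d, rfl⟩ := Submodule.mem_span_singleton.mp hz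
    rw [← hsum, mink_add_right, mink_smul_right, mink_smul_right, hxv, hxu]
    ring
  -- b' := mink u' u' is negative
  have hb' : mink u' u' < 0 := by
    rcases lt_trichotomy (mink u' u') 0 with h | h | h
    · exact h
    · exfalso
      have := hperp u' (horthH u' hu'v h) hu'0
      linarith
    · exfalso
      set n := mcross v u' with hn_def
      have hnn : mink n n = -(a * mink u' u') := by
        rw [hn_def, mink_mcross_self, hvu']; ring
      have hnneg : mink n n < 0 := by rw [hnn]; nlinarith
      have hn0 : n ≠ 0 := by
        intro h0
        rw [h0] at hnneg
        simp [mink] at hnneg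
      have := hperp n (horthH n (mcross_orth_left v u') (mcross_orth_right v u')) hn0
      linarith
  -- normalize u' to get p
  have hu'2 : u' 2 ≠ 0 := by
    intro h
    simp only [mink] at hb'
    rw [h] at hb'
    nlinarith [sq_nonneg (u' 0), sq_nonneg (u' 1)]
  set r := Real.sqrt (-mink u' u') with hr_def
  have hrpos : 0 < r := Real.sqrt_pos.mpr (by linarith)
  have hr2 : r ^ 2 = -mink u' u' := Real.sq_sqrt (by linarith)
  set s : ℝ := if 0 < u' 2 then r⁻¹ else -r⁻¹ with hs_def
  have hs0 : s ≠ 0 := by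
    rw [hs_def]; split <;> simp [hrpos.ne']
  have hs2 : s ^ 2 = (r ^ 2)⁻¹ := by
    rw [hs_def]; split <;> ring
  set p : Fin 3 → ℝ := s • u' with hp_def
  have hppp : mink p p = -1 := by
    rw [hp_def, mink_smul_left, mink_smul_right, ← mul_assoc, ← pow_two, hs2, hr2]
    rw [inv_mul_eq_div, div_neg, div_self hb'.ne]
  have hp2 : 0 < p 2 := by
    have hpapp : p 2 = s * u' 2 := by rw [hp_def]; simp
    rw [hpapp, hs_def]
    split
    · rename_i hgt; exact mul_pos (inv_pos.mpr hrpos) hgt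
    · rename_i hle2
      push_neg at hle2
      have hneg : u' 2 < 0 := lt_of_le_of_ne hle2 hu'2
      have heq2 : -r⁻¹ * u' 2 = r⁻¹ * (-u' 2) := by ring
      rw [heq2]
      exact mul_pos (inv_pos.mpr hrpos) (by linarith)
  have hspanp : Submodule.span ℝ {p} = Submodule.span ℝ {u'} := by
    rw [hp_def]
    exact Submodule.span_singleton_smul_eq (isUnit_iff_ne_zero.mpr hs0) u'
  refine ⟨(p, l), ⟨⟨hppp, hp2⟩, hl1, ?_⟩, ?_⟩
  · intro w hw
    rw [hlv] at hw
    obtain ⟨c, rfl⟩ := Submodule.mem_span_singleton.mp hw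
    rw [hp_def, mink_smul_left, mink_smul_right, hvu']
    ring
  · simp only [Prod.mk.injEq]
    refine ⟨by trivial, by rw [hspanp]; exact HeqSup.symm⟩

/-- The developing map of the flag structure associated to a Fuchsian representation:
`(p, L) ↦ (L, L + ℝ·p)` is a bijection from the projectivized tangent bundle of `ℍ²`
onto the de Sitter component of the Guichard–Wienhard domain of flags. -/
theorem developing_map_bijection :
    Set.BijOn
      (fun pL : (Fin 3 → ℝ) × Submodule ℝ (Fin 3 → ℝ) =>
        (pL.2, pL.2 ⊔ Submodule.span ℝ {pL.1}))
      ProjTangent deSitterFlags :=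
  ⟨maps_to, inj_on, surj_on⟩
end

section
/- For every integer n ≥ 1, the group SL(n+1, ℝ) acts on ℝ^{n+1} × (ℝ^{n+1})* by A·(v, φ) := (A v, φ ∘ A⁻¹), and this action is transitive on the set {(v, φ) : φ(v) = −1}; moreover, the stabilizer of any point of this set is isomorphic as a group to SL(n, ℝ). (This realizes the quadric {z ∈ ℝ_τ^{n+1} : q(z, z) = −1}, a principal bundle over the para-complex hyperbolic space ℍ_τ^n, as the homogeneous space SL(n+1, ℝ)/SL(n, ℝ).) -/
/-!
Write `e₀` for the first standard basis vector. A pair `(v, φ)` with `φ v = -1` is the image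
of `(e₀, -e₀*)` under the matrix whose first column is `v` and whose other columns form a basis
of `ker φ`; rescaling one of those other columns (possible because `n ≥ 1`) puts it in
`SL(n + 1)`. So the quadric is a single orbit, and every stabilizer is conjugate to that of
`(e₀, -e₀*)`, which consists of the matrices whose first row and first column are those of
the identity, i.e. the block matrices `diag(1, B)` with `B ∈ SL(n)`.
-/

open Matrix

theorem Module.Dual.exists_basis_zero_eq_and_apply_succ_eq_zero {K V : Type*} [Field K]
    [AddCommGroup V] [Module K V] [FiniteDimensional K V] {n : ℕ}
    (hV : Module.finrank K V = n + 1) {φ : Module.Dual K V} {v : V} (hv : φ v ≠ 0) :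
    ∃ b : Module.Basis (Fin (n + 1)) K V, b 0 = v ∧ ∀ i : Fin n, φ (b i.succ) = 0 := by
  have hker : Module.finrank K (LinearMap.ker φ) = n := by
    have := finrank_ker_add_one_of_ne_zero (f := φ) (by rintro rfl; exact hv rfl)
    omega
  have hli : ∀ c : K, ∀ x ∈ LinearMap.ker φ, c • v + x = 0 → c = 0 := by
    intro c x hx h
    have := congrArg φ h
    rw [map_add, map_smul, LinearMap.mem_ker.1 hx, smul_eq_mul, add_zero, map_zero] at this
    exact (mul_eq_zero.1 this).resolve_right hv
  have hsp : ∀ z : V, ∃ c : K, z + c • v ∈ LinearMap.ker φ := fun z =>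
    ⟨-(φ z / φ v), by simp [hv]⟩
  exact ⟨.mkFinCons v (Module.finBasisOfFinrankEq K _ hker) hli hsp, by simp,
    fun i => by simp⟩

def finSuccEquivSumUnit (n : ℕ) : Fin (n + 1) ≃ Fin n ⊕ Unit :=
  (finSuccEquiv n).trans (Equiv.optionEquivSumPUnit (Fin n))

@[simp] theorem finSuccEquivSumUnit_zero (n : ℕ) : finSuccEquivSumUnit n 0 = .inr () := rfl

@[simp] theorem finSuccEquivSumUnit_succ {n : ℕ} (i : Fin n) :
    finSuccEquivSumUnit n i.succ = .inl i := by
  simp [finSuccEquivSumUnit]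

namespace Matrix

variable {R : Type*} [CommRing R] {n : ℕ}

def blockDiagOne (B : Matrix (Fin n) (Fin n) R) : Matrix (Fin (n + 1)) (Fin (n + 1)) R :=
  (fromBlocks B 0 0 1).submatrix (finSuccEquivSumUnit n) (finSuccEquivSumUnit n)

section blockDiagOne

variable (B : Matrix (Fin n) (Fin n) R)

@[simp] theorem blockDiagOne_zero_zero : blockDiagOne B 0 0 = 1 := by simp [blockDiagOne]
@[simp] theorem blockDiagOne_zero_succ (j : Fin n) : blockDiagOne B 0 j.succ = 0 := by
  simp [blockDiagOne]
@[simp] theorem blockDiagOne_succ_zero (i : Fin n) : blockDiagOne B i.succ 0 = 0 := by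
  simp [blockDiagOne]
@[simp] theorem blockDiagOne_succ_succ (i j : Fin n) : blockDiagOne B i.succ j.succ = B i j := by
  simp [blockDiagOne]

@[simp] theorem det_blockDiagOne : (blockDiagOne B).det = B.det := by
  rw [blockDiagOne, det_submatrix_equiv_self, det_fromBlocks_zero₂₁, det_one, mul_one]

theorem blockDiagOne_mul (C : Matrix (Fin n) (Fin n) R) :
    blockDiagOne (B * C) = blockDiagOne B * blockDiagOne C := by
  simp only [blockDiagOne, submatrix_mul_equiv, fromBlocks_multiply]
  simp

@[simp] theorem blockDiagOne_one : blockDiagOne (1 : Matrix (Fin n) (Fin n) R) = 1 := by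
  rw [blockDiagOne, fromBlocks_one, submatrix_one_equiv]

theorem blockDiagOne_injective : Function.Injective (blockDiagOne (R := R) (n := n)) :=
  fun B C h => ext fun i j => by simpa using congr_fun₂ h i.succ j.succ

theorem blockDiagOne_submatrix_succ {A : Matrix (Fin (n + 1)) (Fin (n + 1)) R}
    (hcol : A.col 0 = Pi.single 0 1) (hrow : A.row 0 = Pi.single 0 1) :
    blockDiagOne (A.submatrix Fin.succ Fin.succ) = A := by
  ext i j
  cases i using Fin.cases with
  | zero => cases j using Fin.cases with
    | zero => simpa using (congr_fun hcol 0).symm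
    | succ j => simpa using (congr_fun hrow j.succ).symm
  | succ i => cases j using Fin.cases with
    | zero => simpa using (congr_fun hcol i.succ).symm
    | succ j => simp

end blockDiagOne

namespace SpecialLinearGroup

def blockDiagOne : SpecialLinearGroup (Fin n) R →* SpecialLinearGroup (Fin (n + 1)) R where
  toFun B := ⟨Matrix.blockDiagOne (B : Matrix (Fin n) (Fin n) R), by simp⟩
  map_one' := Subtype.ext <| by simp
  map_mul' B C := Subtype.ext <| (congrArg Matrix.blockDiagOne (coe_mul B C)).trans
    (blockDiagOne_mul _ _)

@[simp] theorem coe_blockDiagOne (B : SpecialLinearGroup (Fin n) R) :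
    (blockDiagOne B : Matrix (Fin (n + 1)) (Fin (n + 1)) R) = Matrix.blockDiagOne B :=
  rfl

theorem blockDiagOne_injective :
    Function.Injective (blockDiagOne : SpecialLinearGroup (Fin n) R →* _) :=
  fun _ _ h => Subtype.ext (Matrix.blockDiagOne_injective (congrArg Subtype.val h))

theorem mem_range_blockDiagOne_iff {A : SpecialLinearGroup (Fin (n + 1)) R} :
    A ∈ (blockDiagOne : SpecialLinearGroup (Fin n) R →* _).range ↔
      (A : Matrix (Fin (n + 1)) (Fin (n + 1)) R).col 0 = Pi.single 0 1 ∧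
        (A : Matrix (Fin (n + 1)) (Fin (n + 1)) R).row 0 = Pi.single 0 1 := by
  constructor
  · rintro ⟨B, rfl⟩
    constructor <;> ext i <;> cases i using Fin.cases <;> simp
  · rintro ⟨hcol, hrow⟩
    have hA := Matrix.blockDiagOne_submatrix_succ hcol hrow
    exact ⟨⟨(A : Matrix (Fin (n + 1)) (Fin (n + 1)) R).submatrix Fin.succ Fin.succ,
      by rw [← det_blockDiagOne, hA, A.2]⟩, Subtype.ext hA⟩

end SpecialLinearGroup

end Matrix

namespace Matrix.SpecialLinearGroup

variable {ι R : Type*} [Fintype ι] [DecidableEq ι] [CommRing R]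

abbrev vecCovecAction : MulAction (SpecialLinearGroup ι R) ((ι → R) × ((ι → R) →ₗ[R] R)) where
  smul A p := (A *ᵥ p.1, p.2 ∘ₗ ((A⁻¹ : SpecialLinearGroup ι R) : Matrix ι ι R).mulVecLin)
  one_smul p := Prod.ext (show ((1 : SpecialLinearGroup ι R) : Matrix ι ι R) *ᵥ p.1 = p.1 by simp)
    (LinearMap.ext fun x =>
      show p.2 (((1⁻¹ : SpecialLinearGroup ι R) : Matrix ι ι R) *ᵥ x) = p.2 x by simp)
  mul_smul A B p := Prod.ext
    (show ((A * B : SpecialLinearGroup ι R) : Matrix ι ι R) *ᵥ p.1 =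
      (A : Matrix ι ι R) *ᵥ (B : Matrix ι ι R) *ᵥ p.1 by simp [mulVec_mulVec])
    (LinearMap.ext fun x =>
      show p.2 (((A * B)⁻¹ : SpecialLinearGroup ι R) *ᵥ x) =
        p.2 (((B⁻¹ : SpecialLinearGroup ι R) : Matrix ι ι R) *ᵥ
          ((A⁻¹ : SpecialLinearGroup ι R) : Matrix ι ι R) *ᵥ x) by
      simp [mulVec_mulVec])

end Matrix.SpecialLinearGroup

attribute [local instance] Matrix.SpecialLinearGroup.vecCovecAction

namespace Matrix.SpecialLinearGroup

section VecCovec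

variable {ι R : Type*} [Fintype ι] [DecidableEq ι] [CommRing R]

theorem smul_vecCovec_eq_iff {A : SpecialLinearGroup ι R} {p q : (ι → R) × ((ι → R) →ₗ[R] R)} :
    A • p = q ↔ (A : Matrix ι ι R) *ᵥ p.1 = q.1 ∧
      ∀ x, p.2 ((A⁻¹ : SpecialLinearGroup ι R) *ᵥ x) = q.2 x := by
  rw [Prod.ext_iff, LinearMap.ext_iff]
  exact Iff.rfl

theorem smul_vecCovec_eq_iff_comp {A : SpecialLinearGroup ι R}
    {p q : (ι → R) × ((ι → R) →ₗ[R] R)} :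
    A • p = q ↔ (A : Matrix ι ι R) *ᵥ p.1 = q.1 ∧ ∀ x, p.2 x = q.2 ((A : Matrix ι ι R) *ᵥ x) := by
  rw [smul_vecCovec_eq_iff]
  refine and_congr_right fun _ => ⟨fun h x => ?_, fun h x => ?_⟩
  · rw [← h, mulVec_mulVec, ← coe_mul, inv_mul_cancel, coe_one, one_mulVec]
  · rw [h, mulVec_mulVec, ← coe_mul, mul_inv_cancel, coe_one, one_mulVec]

end VecCovec

variable {n : ℕ}

def quadricBasePoint (R : Type*) [CommRing R] (n : ℕ) :
    (Fin (n + 1) → R) × ((Fin (n + 1) → R) →ₗ[R] R) :=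
  (Pi.single 0 1, -LinearMap.proj 0)

theorem mem_stabilizer_quadricBasePoint_iff {R : Type*} [CommRing R]
    {A : SpecialLinearGroup (Fin (n + 1)) R} :
    A ∈ MulAction.stabilizer _ (quadricBasePoint R n) ↔
      (A : Matrix (Fin (n + 1)) (Fin (n + 1)) R).col 0 = Pi.single 0 1 ∧
        (A : Matrix (Fin (n + 1)) (Fin (n + 1)) R).row 0 = Pi.single 0 1 := by
  rw [MulAction.mem_stabilizer_iff, smul_vecCovec_eq_iff_comp, quadricBasePoint, mulVec_single_one]
  refine and_congr_right fun _ => ⟨fun h => funext fun j => ?_, fun h x => ?_⟩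
  · simpa [Pi.single_comm 0 (1 : R) j, mulVec, dotProduct_single_one] using (h (Pi.single j 1)).symm
  · simp [mulVec, ← row_apply, h]

theorem stabilizer_quadricBasePoint {R : Type*} [CommRing R] :
    MulAction.stabilizer _ (quadricBasePoint R n) =
      (blockDiagOne : SpecialLinearGroup (Fin n) R →* _).range := by
  ext A
  rw [mem_stabilizer_quadricBasePoint_iff, mem_range_blockDiagOne_iff]

theorem exists_smul_quadricBasePoint_eq {K : Type*} [Field K] (hn : 1 ≤ n)
    {p : (Fin (n + 1) → K) × ((Fin (n + 1) → K) →ₗ[K] K)} (hp : p.2 p.1 = -1) :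
    ∃ A : SpecialLinearGroup (Fin (n + 1)) K, A • quadricBasePoint K n = p := by
  obtain ⟨b, hb0, hbφ⟩ := Module.Dual.exists_basis_zero_eq_and_apply_succ_eq_zero
    (Module.finrank_fin_fun K) (hp ▸ neg_ne_zero.2 one_ne_zero : p.2 p.1 ≠ 0)
  set M := LinearMap.toMatrix' (b.equivFun.symm : (Fin (n + 1) → K) →ₗ[K] Fin (n + 1) → K)
  have hM : ∀ x, M *ᵥ x = ∑ i, x i • b i := fun x => by
    rw [LinearMap.toMatrix'_mulVec, LinearEquiv.coe_coe, Module.Basis.equivFun_symm_apply]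
  have hMφ : ∀ x, p.2 (M *ᵥ x) = -x 0 := fun x => by
    simp [hM, Fin.sum_univ_succ, hb0, hbφ, hp]
  have hMdet : M.det ≠ 0 := by
    rw [LinearMap.det_toMatrix']
    exact (LinearEquiv.isUnit_det' _).ne_zero
  have hlast : Fin.last n ≠ 0 := by
    rw [Ne, Fin.ext_iff, Fin.val_last, Fin.val_zero]
    omega
  set d : Fin (n + 1) → K := Function.update 1 (Fin.last n) M.det⁻¹
  have hd0 : d 0 = 1 := by simp [d, hlast.symm]
  refine ⟨⟨M * diagonal d, ?_⟩, smul_vecCovec_eq_iff_comp.2 ⟨?_, fun x => ?_⟩⟩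
  · simp [d, Finset.prod_update_of_mem, hMdet]
  · rw [quadricBasePoint, ← mulVec_mulVec, diagonal_mulVec_single, hd0, mul_one, hM]
    simp [Pi.single_apply, hb0]
  · simp [quadricBasePoint, ← mulVec_mulVec, hMφ, mulVec_diagonal, hd0]

theorem exists_smul_eq_of_apply_eq_neg_one {K : Type*} [Field K] (hn : 1 ≤ n)
    {p q : (Fin (n + 1) → K) × ((Fin (n + 1) → K) →ₗ[K] K)} (hp : p.2 p.1 = -1)
    (hq : q.2 q.1 = -1) : ∃ A : SpecialLinearGroup (Fin (n + 1)) K, A • p = q := by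
  obtain ⟨M, rfl⟩ := exists_smul_quadricBasePoint_eq hn hp
  obtain ⟨N, rfl⟩ := exists_smul_quadricBasePoint_eq hn hq
  exact ⟨N * M⁻¹, by rw [smul_smul, inv_mul_cancel_right]⟩

theorem nonempty_mulEquiv_stabilizer {K : Type*} [Field K] (hn : 1 ≤ n)
    {p : (Fin (n + 1) → K) × ((Fin (n + 1) → K) →ₗ[K] K)} (hp : p.2 p.1 = -1) :
    Nonempty (SpecialLinearGroup (Fin n) K ≃*
      MulAction.stabilizer (SpecialLinearGroup (Fin (n + 1)) K) p) := by
  obtain ⟨M, rfl⟩ := exists_smul_quadricBasePoint_eq hn hp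
  exact ⟨(MonoidHom.ofInjective blockDiagOne_injective).trans <|
    (MulEquiv.subgroupCongr stabilizer_quadricBasePoint.symm).trans <|
      MulAction.stabilizerEquivStabilizer rfl⟩

end Matrix.SpecialLinearGroup

open Matrix.SpecialLinearGroup

/-- `SL(n+1, ℝ)` acts on pairs of a vector and a linear functional by
`A·(v, φ) = (Av, φ ∘ A⁻¹)`; this action is transitive on the set
`{(v, φ) : φ(v) = −1}` (the quadric `{q(z,z) = −1}` over the para-complex numbers),
and the stabilizer of any point of this set is isomorphic as a group to `SL(n, ℝ)`. -/
theorem quadric_homogeneous_space (n : ℕ) (hn : 1 ≤ n) :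
    -- transitivity on `{(v, φ) : φ(v) = −1}`
    (∀ p p' : (Fin (n + 1) → ℝ) × ((Fin (n + 1) → ℝ) →ₗ[ℝ] ℝ),
      p.2 p.1 = -1 → p'.2 p'.1 = -1 →
      ∃ A : Matrix.SpecialLinearGroup (Fin (n + 1)) ℝ,
        (A : Matrix (Fin (n + 1)) (Fin (n + 1)) ℝ).mulVec p.1 = p'.1 ∧
        ∀ x : Fin (n + 1) → ℝ,
          p.2 (((A⁻¹ : Matrix.SpecialLinearGroup (Fin (n + 1)) ℝ) :
            Matrix (Fin (n + 1)) (Fin (n + 1)) ℝ).mulVec x) = p'.2 x) ∧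
    -- the stabilizer of any point is isomorphic to `SL(n, ℝ)`
    (∀ v : Fin (n + 1) → ℝ, ∀ φ : (Fin (n + 1) → ℝ) →ₗ[ℝ] ℝ, φ v = -1 →
      ∃ f : Matrix.SpecialLinearGroup (Fin n) ℝ →
          Matrix.SpecialLinearGroup (Fin (n + 1)) ℝ,
        Function.Injective f ∧
        (∀ B C : Matrix.SpecialLinearGroup (Fin n) ℝ, f (B * C) = f B * f C) ∧
        (∀ B : Matrix.SpecialLinearGroup (Fin n) ℝ,
          ((f B : Matrix (Fin (n + 1)) (Fin (n + 1)) ℝ).mulVec v = v ∧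
            ∀ x : Fin (n + 1) → ℝ,
              φ ((((f B)⁻¹ : Matrix.SpecialLinearGroup (Fin (n + 1)) ℝ) :
                Matrix (Fin (n + 1)) (Fin (n + 1)) ℝ).mulVec x) = φ x)) ∧
        (∀ A : Matrix.SpecialLinearGroup (Fin (n + 1)) ℝ,
          ((A : Matrix (Fin (n + 1)) (Fin (n + 1)) ℝ).mulVec v = v ∧
            ∀ x : Fin (n + 1) → ℝ,
              φ (((A⁻¹ : Matrix.SpecialLinearGroup (Fin (n + 1)) ℝ) :
                Matrix (Fin (n + 1)) (Fin (n + 1)) ℝ).mulVec x) = φ x) →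
          ∃ B, f B = A)) := by
  refine ⟨fun p q hp hq => ?_, fun v φ hv => ?_⟩
  · obtain ⟨A, hA⟩ := exists_smul_eq_of_apply_eq_neg_one hn hp hq
    exact ⟨A, smul_vecCovec_eq_iff.1 hA⟩
  · obtain ⟨e⟩ := nonempty_mulEquiv_stabilizer hn (p := (v, φ)) hv
    refine ⟨fun B => e B, Subtype.val_injective.comp e.injective, fun B C => by simp,
      fun B => smul_vecCovec_eq_iff.1 (e B).2, fun A hA => ⟨e.symm ⟨A, ?_⟩, by simp⟩⟩
    exact smul_vecCovec_eq_iff.2 hA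
end
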